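/- Suppose: f : ℂⁿ → ℝ is convex and Fréchet differentiable with ∇f Lipschitz continuous with constant L > 0; λ > 0; 0 < α ≤ 1/L; β = αλ; I + βW is positive semidefinite with spectral norm σ > 0; and 0 < η < 2/σ (strict). Fix x^k ∈ ℂⁿ, set z = x^k − α∇f(x^k), define S : ℝⁿ → ℝⁿ₊ by S(x) = P₊(x − η[(I + βW)x + β𝟙 − |z|]), and let u ∈ ℂⁿ be the phase vector with uᵢ = zᵢ/|zᵢ| if zᵢ ≠ 0 and uᵢ = 1 otherwise. Let C(x) = f(x) + λ·P_W(x) and let m ≥ 1. If C(S^m(|x^k|) ⊙ u) = C(x^k), then S(|x^k|) = |x^k| and x^k = S^m(|x^k|) ⊙ u, i.e., x^k is a fixed point of the iteration. -/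

import Mathlib

/-!
Write `a = |xᵏ|` and `z = xᵏ - α∇f(xᵏ)`. Since `αL ≤ 1`, the descent lemma makes
`x ↦ f(xᵏ) - (α/2)‖∇f(xᵏ)‖² + ‖x - z‖²/(2α) + λ P_W(x)` a majorant of `C`, exact at `xᵏ`.
At `v ⊙ u` with `v ≥ 0` the phases match those of `z`, so there the majorant is `Q(v)/α` up to
a constant, with `Q(v) = ½ vᵀ(I + βW)v - (|z| - β𝟙)ᵀv`; and `S` is the projected gradient step
of `Q` on `ℝⁿ₊`, which for `η < 2/σ` decreases `Q` by at least `(1/η - σ/2)‖S v - v‖²`.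
At `xᵏ` itself the majorant exceeds its value at `a ⊙ u` by the phase defect
`Σ (|xᵏᵢ - zᵢ|² - (|xᵏᵢ| - |zᵢ|)²) / (2α) ≥ 0`. Equal costs therefore force `S a = a` and a
zero phase defect: each `xᵏᵢ` lies on the ray of `zᵢ`, and `xᵏᵢ = 0` where `zᵢ = 0` because
there the gradient of `Q` is at least `β > 0`.
-/

open Finset Matrix
open scoped RealInnerProductSpace

section Descent

variable {E : Type*} [NormedAddCommGroup E] [InnerProductSpace ℝ E] [CompleteSpace E]
  {f : E → ℝ} {g : E → E} {L : ℝ}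

theorem le_add_inner_add_sq_of_lipschitz_gradient (hf : ∀ x, HasGradientAt f (g x) x)
    (hg : ∀ x y, ‖g x - g y‖ ≤ L * ‖x - y‖) (x y : E) :
    f y ≤ f x + ⟪g x, y - x⟫ + L / 2 * ‖y - x‖ ^ 2 := by
  set d := y - x
  let φ : ℝ → ℝ := fun t => f (x + t • d) - t * ⟪g x, d⟫ - L / 2 * t ^ 2 * ‖d‖ ^ 2
  have hφ : ∀ t, HasDerivAt φ (⟪g (x + t • d) - g x, d⟫ - L * t * ‖d‖ ^ 2) t := by
    intro t
    have hline : HasDerivAt (fun t : ℝ => x + t • d) d t := by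
      simpa using ((hasDerivAt_id t).smul_const d).const_add x
    have := (((hf _).hasFDerivAt.comp_hasDerivAt t hline).sub
      ((hasDerivAt_id t).mul_const ⟪g x, d⟫)).sub
      (((hasDerivAt_pow 2 t).const_mul (L / 2)).mul_const (‖d‖ ^ 2))
    refine this.congr_deriv ?_
    simp only [InnerProductSpace.toDual_apply_apply, inner_sub_left]
    ring
  have hanti : AntitoneOn φ (Set.Icc 0 1) := by
    refine antitoneOn_of_deriv_nonpos (convex_Icc 0 1)
      (fun t _ => (hφ t).continuousAt.continuousWithinAt)
      (fun t _ => (hφ t).differentiableAt.differentiableWithinAt) fun t ht => ?_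
    rw [interior_Icc] at ht
    rw [(hφ t).deriv, sub_nonpos]
    calc ⟪g (x + t • d) - g x, d⟫ ≤ ‖g (x + t • d) - g x‖ * ‖d‖ := real_inner_le_norm _ _
      _ ≤ L * ‖t • d‖ * ‖d‖ := by gcongr; simpa using hg (x + t • d) x
      _ = L * t * ‖d‖ ^ 2 := by rw [norm_smul, Real.norm_of_nonneg ht.1.le]; ring
  have := hanti (Set.left_mem_Icc.2 zero_le_one) (Set.right_mem_Icc.2 zero_le_one) zero_le_one
  simp only [φ, one_smul, zero_smul, add_zero, one_pow, one_mul, zero_mul, zero_pow two_ne_zero,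
    mul_zero, sub_zero, add_sub_cancel, d] at this
  linarith

theorem le_sub_add_norm_sub_gradientStep_sq (hf : ∀ x, HasGradientAt f (g x) x)
    (hg : ∀ x y, ‖g x - g y‖ ≤ L * ‖x - y‖) {α : ℝ} (hα : 0 < α) (hαL : α * L ≤ 1) (x y : E) :
    α * f y ≤ α * f x - α ^ 2 / 2 * ‖g x‖ ^ 2 + 1 / 2 * ‖y - (x - α • g x)‖ ^ 2 := by
  have hdesc := mul_le_mul_of_nonneg_left
    (le_add_inner_add_sq_of_lipschitz_gradient hf hg x y) hα.le
  have hexpand : ‖y - (x - α • g x)‖ ^ 2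
      = ‖y - x‖ ^ 2 + 2 * α * ⟪g x, y - x⟫ + α ^ 2 * ‖g x‖ ^ 2 := by
    rw [sub_sub_eq_add_sub, add_sub_right_comm, norm_add_sq_real, real_inner_smul_right,
      norm_smul, Real.norm_of_nonneg hα.le, real_inner_comm]
    ring
  have hcurv : α * L * ‖y - x‖ ^ 2 ≤ ‖y - x‖ ^ 2 := mul_le_of_le_one_left (by positivity) hαL
  linarith

end Descent

variable {ι : Type*} [Fintype ι]

lemma mulVec_dotProduct_self_le_opNorm_mul [DecidableEq ι] (A : Matrix ι ι ℝ) (d : ι → ℝ) :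
    A *ᵥ d ⬝ᵥ d ≤ ‖toEuclideanCLM (𝕜 := ℝ) A‖ * (d ⬝ᵥ d) := by
  set x : EuclideanSpace ℝ ι := WithLp.toLp 2 d
  have hx : d ⬝ᵥ d = ‖x‖ ^ 2 := by
    rw [← real_inner_self_eq_norm_sq, EuclideanSpace.inner_eq_star_dotProduct]
    simp [x]
  calc A *ᵥ d ⬝ᵥ d = ⟪x, toEuclideanCLM (𝕜 := ℝ) A x⟫ := by
        rw [inner_toEuclideanCLM, dotProduct_comm]
    _ ≤ ‖x‖ * ‖toEuclideanCLM (𝕜 := ℝ) A x‖ := real_inner_le_norm _ _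
    _ ≤ ‖x‖ * (‖toEuclideanCLM (𝕜 := ℝ) A‖ * ‖x‖) := by
        gcongr; exact ContinuousLinearMap.le_opNorm _ _
    _ = _ := by rw [hx]; ring

section ProjectedGradient

noncomputable def quadObj (A : Matrix ι ι ℝ) (b v : ι → ℝ) : ℝ := 1 / 2 * (A *ᵥ v ⬝ᵥ v) - b ⬝ᵥ v

def projGradStep (A : Matrix ι ι ℝ) (b : ι → ℝ) (η : ℝ) (v : ι → ℝ) : ι → ℝ :=
  fun i => max (v i - η * ((A *ᵥ v) i - b i)) 0

variable {A : Matrix ι ι ℝ} {b : ι → ℝ} {σ η : ℝ}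

lemma quadObj_add (hA : A.IsSymm) (v d : ι → ℝ) :
    quadObj A b (v + d) = quadObj A b v + (A *ᵥ v - b) ⬝ᵥ d + 1 / 2 * (A *ᵥ d ⬝ᵥ d) := by
  have hcross : A *ᵥ d ⬝ᵥ v = A *ᵥ v ⬝ᵥ d := by
    rw [dotProduct_comm, dotProduct_mulVec, ← mulVec_transpose, hA]
  simp only [quadObj, mulVec_add, add_dotProduct, dotProduct_add, sub_dotProduct, hcross]
  ring

-- The variational inequality of the projection onto `[0, ∞)`, tested against `v ≥ 0`.
lemma mul_max_sub_self_le {v g η : ℝ} (hv : 0 ≤ v) :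
    η * g * (max (v - η * g) 0 - v) ≤ -(max (v - η * g) 0 - v) ^ 2 := by
  rcases le_total 0 (v - η * g) with h | h
  · rw [max_eq_left h]; nlinarith
  · rw [max_eq_right h]; nlinarith

lemma projGradStep_nonneg (A : Matrix ι ι ℝ) (b : ι → ℝ) (η : ℝ) (v : ι → ℝ) :
    0 ≤ projGradStep A b η v :=
  fun _ => le_max_right _ _

lemma quadObj_projGradStep_add_le (hA : A.IsSymm) (hσ : ∀ d, A *ᵥ d ⬝ᵥ d ≤ σ * (d ⬝ᵥ d))
    (hη : 0 < η) {v : ι → ℝ} (hv : 0 ≤ v) :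
    quadObj A b (projGradStep A b η v)
      + (1 / η - σ / 2) * ((projGradStep A b η v - v) ⬝ᵥ (projGradStep A b η v - v))
      ≤ quadObj A b v := by
  set d := projGradStep A b η v - v
  have hgrad : η * ((A *ᵥ v - b) ⬝ᵥ d) ≤ -(d ⬝ᵥ d) := by
    rw [dotProduct, dotProduct, mul_sum, ← sum_neg_distrib]
    refine sum_le_sum fun i _ => ?_
    rw [← mul_assoc, ← sq, Pi.sub_apply]
    exact mul_max_sub_self_le (hv i)
  have hgrad' : (A *ᵥ v - b) ⬝ᵥ d ≤ -(1 / η) * (d ⬝ᵥ d) := by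
    have := mul_le_mul_of_nonneg_left hgrad (one_div_pos.2 hη).le
    rwa [← mul_assoc, one_div_mul_cancel hη.ne', one_mul, mul_neg, ← neg_mul] at this
  have hexpand := quadObj_add (b := b) hA v d
  rw [add_sub_cancel] at hexpand
  linarith [hσ d]

lemma quadObj_iterate_projGradStep_add_le (hA : A.IsSymm)
    (hσ : ∀ d, A *ᵥ d ⬝ᵥ d ≤ σ * (d ⬝ᵥ d)) (hη : 0 < η) (hκ : 0 ≤ 1 / η - σ / 2)
    {m : ℕ} (hm : 1 ≤ m) {v : ι → ℝ} (hv : 0 ≤ v) :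
    quadObj A b ((projGradStep A b η)^[m] v)
      + (1 / η - σ / 2) * ((projGradStep A b η v - v) ⬝ᵥ (projGradStep A b η v - v))
      ≤ quadObj A b v := by
  have hdecr : ∀ k w, 0 ≤ w → quadObj A b ((projGradStep A b η)^[k] w) ≤ quadObj A b w := by
    intro k
    induction k with
    | zero => exact fun _ _ => le_rfl
    | succ k ih =>
      intro w hw
      rw [Function.iterate_succ_apply]
      refine (ih _ (projGradStep_nonneg A b η w)).trans ?_
      refine le_of_add_le_of_nonneg_left (quadObj_projGradStep_add_le hA hσ hη hw)
        (mul_nonneg hκ ?_)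
      exact sum_nonneg fun i _ => mul_self_nonneg _
  obtain ⟨k, rfl⟩ := Nat.exists_eq_add_of_le' hm
  rw [Function.iterate_succ_apply]
  linarith [hdecr k _ (projGradStep_nonneg A b η v),
    quadObj_projGradStep_add_le (b := b) hA hσ hη hv]

end ProjectedGradient

noncomputable def penalty (W : Matrix ι ι ℝ) (v : ι → ℝ) : ℝ :=
  (∑ i, v i) + (1 / 2) * ∑ i, ∑ j, W i j * (v i * v j)

lemma half_sum_sq_sub_add_smul_penalty [DecidableEq ι] (W : Matrix ι ι ℝ) (β : ℝ)
    (c v : ι → ℝ) :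
    1 / 2 * ∑ i, (v i - c i) ^ 2 + β * penalty W v
      = quadObj (1 + β • W) (fun i => c i - β) v + 1 / 2 * ∑ i, c i ^ 2 := by
  have hW : W *ᵥ v ⬝ᵥ v = ∑ i, ∑ j, W i j * (v i * v j) := by
    simp only [dotProduct, mulVec, sum_mul]
    exact sum_congr rfl fun i _ => sum_congr rfl fun j _ => by ring
  have hsq : ∑ i, (v i - c i) ^ 2 = v ⬝ᵥ v - 2 * (c ⬝ᵥ v) + ∑ i, c i ^ 2 := by
    rw [dotProduct, dotProduct, mul_sum, ← sum_sub_distrib, ← sum_add_distrib]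
    exact sum_congr rfl fun i _ => by ring
  have hlin : (fun i => c i - β) ⬝ᵥ v = c ⬝ᵥ v - β * ∑ i, v i := by
    simp only [dotProduct, sub_mul, sum_sub_distrib, mul_sum]
  simp only [quadObj, penalty, add_mulVec, one_mulVec, smul_mulVec, add_dotProduct,
    smul_dotProduct, hW, smul_eq_mul, hsq, hlin]
  ring

noncomputable def phase (z : ℂ) : ℂ := if z ≠ 0 then z / (‖z‖ : ℂ) else 1

lemma norm_mul_phase (z : ℂ) : (‖z‖ : ℂ) * phase z = z := by
  by_cases hz : z = 0
  · simp [hz]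
  · rw [phase, if_pos hz, mul_div_cancel₀ _ (by exact_mod_cast norm_ne_zero_iff.2 hz)]

lemma norm_phase (z : ℂ) : ‖phase z‖ = 1 := by
  by_cases hz : z = 0
  · simp [phase, hz]
  · rw [phase, if_pos hz, norm_div, Complex.norm_real, norm_norm,
      div_self (norm_ne_zero_iff.2 hz)]

lemma norm_ofReal_mul_phase_sub (r : ℝ) (z : ℂ) :
    ‖(r : ℂ) * phase z - z‖ = |r - ‖z‖| := by
  have hfactor : (r : ℂ) * phase z - z = ((r - ‖z‖ : ℝ) : ℂ) * phase z := by
    rw [Complex.ofReal_sub, sub_mul, norm_mul_phase]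
  rw [hfactor, norm_mul, norm_phase, mul_one, Complex.norm_real, Real.norm_eq_abs]

lemma eq_norm_mul_phase {w z : ℂ} (h : ‖w - z‖ ^ 2 = (‖w‖ - ‖z‖) ^ 2) (h0 : z = 0 → w = 0) :
    w = ‖w‖ * phase z := by
  by_cases hz : z = 0
  · simp [h0 hz]
  rw [← sq_abs (‖w‖ - ‖z‖), sq_eq_sq₀ (norm_nonneg _) (abs_nonneg _)] at h
  have hray : (‖w‖ : ℂ) * z = ‖z‖ * w := by
    simpa [Complex.real_smul] using (sameRay_iff_norm_sub.2 h).norm_smul_eq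
  have hz' : (‖z‖ : ℂ) ≠ 0 := by exact_mod_cast norm_ne_zero_iff.2 hz
  rw [phase, if_pos hz, mul_div_assoc', eq_div_iff hz', hray, mul_comm]

noncomputable def modulusStep [DecidableEq ι] (W : Matrix ι ι ℝ) (β η : ℝ)
    (z : EuclideanSpace ℂ ι) : (ι → ℝ) → ι → ℝ :=
  projGradStep (1 + β • W) (fun i => ‖z i‖ - β) η

noncomputable def cost (f : EuclideanSpace ℂ ι → ℝ) (lam : ℝ) (W : Matrix ι ι ℝ)
    (x : EuclideanSpace ℂ ι) : ℝ :=
  f x + lam * penalty W (fun i => ‖x i‖)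

lemma norm_sq_toLp_ofReal_mul_phase_sub (v : ι → ℝ) (z : EuclideanSpace ℂ ι) :
    ‖WithLp.toLp 2 (fun i => (v i : ℂ) * phase (z i)) - z‖ ^ 2 = ∑ i, (v i - ‖z i‖) ^ 2 := by
  rw [EuclideanSpace.norm_sq_eq]
  exact sum_congr rfl fun i _ => by
    rw [PiLp.sub_apply, norm_ofReal_mul_phase_sub, sq_abs]

theorem cost_modulusStep_iterate_add_le [DecidableEq ι] {f : EuclideanSpace ℂ ι → ℝ}
    {g : EuclideanSpace ℂ ι → EuclideanSpace ℂ ι} {L α lam β σ η : ℝ} {W : Matrix ι ι ℝ}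
    (hf : ∀ x, HasGradientAt f (g x) x) (hg : ∀ x y, ‖g x - g y‖ ≤ L * ‖x - y‖)
    (hα : 0 < α) (hαL : α * L ≤ 1) (hβ : β = α * lam) (hW : W.IsSymm)
    (hσ : ∀ d, (1 + β • W) *ᵥ d ⬝ᵥ d ≤ σ * (d ⬝ᵥ d)) (hη : 0 < η) (hκ : 0 ≤ 1 / η - σ / 2)
    {m : ℕ} (hm : 1 ≤ m) {x z : EuclideanSpace ℂ ι} (hz : z = x - α • g x) :
    α * cost f lam W (WithLp.toLp 2 fun i =>
        ((modulusStep W β η z)^[m] (fun i => ‖x i‖) i : ℂ) * phase (z i))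
      + (1 / η - σ / 2) * ((modulusStep W β η z (fun i => ‖x i‖) - fun i => ‖x i‖)
          ⬝ᵥ (modulusStep W β η z (fun i => ‖x i‖) - fun i => ‖x i‖))
      + 1 / 2 * ∑ i, (‖x i - z i‖ ^ 2 - (‖x i‖ - ‖z i‖) ^ 2)
      ≤ α * cost f lam W x := by
  subst hβ
  have hv : 0 ≤ (modulusStep W (α * lam) η z)^[m] fun i => ‖x i‖ := by
    obtain ⟨k, rfl⟩ := Nat.exists_eq_add_of_le' hm
    rw [Function.iterate_succ_apply']
    exact projGradStep_nonneg _ _ _ _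
  have hdescent := quadObj_iterate_projGradStep_add_le (b := fun i => ‖z i‖ - α * lam)
    ((isSymm_one).add (hW.smul _)) hσ hη hκ hm (v := fun i => ‖x i‖) fun i => norm_nonneg _
  have hmaj := le_sub_add_norm_sub_gradientStep_sq hf hg hα hαL x
    (WithLp.toLp 2 fun i =>
      ((modulusStep W (α * lam) η z)^[m] (fun i => ‖x i‖) i : ℂ) * phase (z i))
  rw [← hz, norm_sq_toLp_ofReal_mul_phase_sub] at hmaj
  have hxz : ‖x - z‖ ^ 2 = α ^ 2 * ‖g x‖ ^ 2 := by
    rw [hz, sub_sub_cancel, norm_smul, Real.norm_of_nonneg hα.le, mul_pow]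
  rw [EuclideanSpace.norm_sq_eq] at hxz
  simp only [PiLp.sub_apply] at hxz
  have hpen_v := half_sum_sq_sub_add_smul_penalty W (α * lam) (fun i => ‖z i‖)
    ((modulusStep W (α * lam) η z)^[m] fun i => ‖x i‖)
  have hpen_a := half_sum_sq_sub_add_smul_penalty W (α * lam) (fun i => ‖z i‖) fun i => ‖x i‖
  simp only [cost, norm_mul, Complex.norm_real, norm_phase, mul_one, Real.norm_of_nonneg (hv _),
    sum_sub_distrib]
  simp only [modulusStep] at hpen_v hmaj ⊢
  linarith

lemma eq_zero_of_modulusStep_eq_self [DecidableEq ι] {W : Matrix ι ι ℝ} {β η : ℝ}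
    {z : EuclideanSpace ℂ ι} {v : ι → ℝ} (hW : ∀ i j, 0 ≤ W i j) (hβ : 0 < β) (hη : 0 < η)
    (hv : 0 ≤ v) (hfix : modulusStep W β η z v = v) {i : ι} (hz : z i = 0) : v i = 0 := by
  have hgrad : 0 < ((1 + β • W) *ᵥ v) i - (‖z i‖ - β) := by
    have hWv : 0 ≤ (W *ᵥ v) i := sum_nonneg fun j _ => mul_nonneg (hW i j) (hv j)
    simp only [add_mulVec, one_mulVec, smul_mulVec, Pi.add_apply, Pi.smul_apply, smul_eq_mul,
      hz, norm_zero]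
    have hvi : 0 ≤ v i := hv i
    linarith [mul_nonneg hβ.le hWv]
  by_contra hne
  have hstep : modulusStep W β η z v i < v i :=
    max_lt (by linarith [mul_pos hη hgrad]) ((hv i).lt_of_ne' hne)
  exact hstep.ne (congrFun hfix i)

theorem stmt13_general (n : ℕ) (W : Matrix (Fin n) (Fin n) ℝ)
    (hsymm : ∀ i j, W i j = W j i) (hnonneg : ∀ i j, 0 ≤ W i j)
    (f : EuclideanSpace ℂ (Fin n) → ℝ)
    (gradf : EuclideanSpace ℂ (Fin n) → EuclideanSpace ℂ (Fin n))
    (hdiff : ∀ x, HasGradientAt f (gradf x) x)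
    (L : ℝ) (hL : 0 < L)
    (hlip : ∀ x y, ‖gradf x - gradf y‖ ≤ L * ‖x - y‖)
    (lam : ℝ) (hlam : 0 < lam)
    (α : ℝ) (hα0 : 0 < α) (hα : α ≤ 1 / L)
    (β : ℝ) (hβ : β = α * lam)
    (σ : ℝ) (hσpos : 0 < σ)
    (hσ : σ = ‖Matrix.toEuclideanCLM (𝕜 := ℝ) ((1 : Matrix (Fin n) (Fin n) ℝ) + β • W)‖)
    (η : ℝ) (hη0 : 0 < η) (hη : η < 2 / σ)
    (xk : EuclideanSpace ℂ (Fin n))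
    (z : EuclideanSpace ℂ (Fin n)) (hz : z = xk - α • gradf xk)
    (S : (Fin n → ℝ) → (Fin n → ℝ))
    (hS : S = fun x i => max (x i
        - η * ((((1 : Matrix (Fin n) (Fin n) ℝ) + β • W).mulVec x) i
            + β - ‖z i‖)) 0)
    (u : Fin n → ℂ)
    (hu : ∀ i, u i = if z i ≠ 0 then z i / (‖z i‖ : ℂ) else 1)
    (C : EuclideanSpace ℂ (Fin n) → ℝ)
    (hC : C = fun x => f x + lam * ((∑ i, ‖x i‖)
        + (1 / 2) * ∑ i, ∑ j, W i j * (‖x i‖ * ‖x j‖)))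
    (m : ℕ) (hm : 1 ≤ m)
    (heq : C (WithLp.toLp 2 (fun i => ((S^[m] (fun i => ‖xk i‖)) i : ℂ) * u i)) = C xk) :
    S (fun i => ‖xk i‖) = (fun i => ‖xk i‖)
    ∧ xk = WithLp.toLp 2 (fun i => ((S^[m] (fun i => ‖xk i‖)) i : ℂ) * u i) := by
  have hS' : S = modulusStep W β η z := by
    rw [hS]; funext x i; simp only [modulusStep, projGradStep]; ring_nf
  have hu' : u = fun i => phase (z i) := funext hu
  have hC' : C = cost f lam W := hC
  subst hS' hu' hC'
  have hκ : 0 < 1 / η - σ / 2 := by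
    have := (lt_div_iff₀ hσpos).1 hη
    rw [sub_pos, div_lt_div_iff₀ two_pos hη0]; linarith
  have hdecr := cost_modulusStep_iterate_add_le hdiff hlip hα0 ((le_div_iff₀ hL).1 hα) hβ
    (IsSymm.ext fun i j => hsymm j i) (hσ ▸ mulVec_dotProduct_self_le_opNorm_mul _) hη0 hκ.le hm hz
  rw [heq] at hdecr
  have hgap : ∀ i, 0 ≤ ‖xk i - z i‖ ^ 2 - (‖xk i‖ - ‖z i‖) ^ 2 := fun i => by
    rw [sub_nonneg, ← sq_abs (‖xk i‖ - _)]; gcongr; exact abs_norm_sub_norm_le _ _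
  have hD : 0 ≤ (1 / η - σ / 2) * ((modulusStep W β η z (fun i => ‖xk i‖) - fun i => ‖xk i‖)
      ⬝ᵥ (modulusStep W β η z (fun i => ‖xk i‖) - fun i => ‖xk i‖)) :=
    mul_nonneg hκ.le (sum_nonneg fun i _ => mul_self_nonneg _)
  have hE := sum_nonneg fun i (_ : i ∈ univ) => hgap i
  have hfix : modulusStep W β η z (fun i => ‖xk i‖) = fun i => ‖xk i‖ := sub_eq_zero.1 <|
    dotProduct_self_eq_zero.1 <| (mul_eq_zero.1 (by linarith)).resolve_left hκ.ne'
  refine ⟨hfix, ?_⟩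
  rw [Function.iterate_fixed hfix]
  ext i
  have hgap_i := (sum_eq_zero_iff_of_nonneg fun i _ => hgap i).1 (by linarith) i (mem_univ i)
  exact eq_norm_mul_phase (by linarith) fun hz0 => norm_eq_zero.1 <|
    eq_zero_of_modulusStep_eq_self hnonneg (hβ ▸ mul_pos hα0 hlam) hη0 (fun j => norm_nonneg _)
      hfix hz0

/-- Fixed-point characterization: with strict step size 0 < η < 2/σ, if
C(S^m(|x^k|) ⊙ u) = C(x^k) then S(|x^k|) = |x^k| and x^k = S^m(|x^k|) ⊙ u. -/
theorem stmt13 (n : ℕ) (hn : 0 < n) (W : Matrix (Fin n) (Fin n) ℝ)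
    (hsymm : ∀ i j, W i j = W j i) (hnonneg : ∀ i j, 0 ≤ W i j)
    (hdiag : ∀ i, W i i = 0)
    (f : EuclideanSpace ℂ (Fin n) → ℝ)
    (gradf : EuclideanSpace ℂ (Fin n) → EuclideanSpace ℂ (Fin n))
    (hconv : ConvexOn ℝ Set.univ f)
    (hdiff : ∀ x, HasGradientAt f (gradf x) x)
    (L : ℝ) (hL : 0 < L)
    (hlip : ∀ x y, ‖gradf x - gradf y‖ ≤ L * ‖x - y‖)
    (lam : ℝ) (hlam : 0 < lam)
    (α : ℝ) (hα0 : 0 < α) (hα : α ≤ 1 / L)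
    (β : ℝ) (hβ : β = α * lam)
    (hpsd : ((1 : Matrix (Fin n) (Fin n) ℝ) + β • W).PosSemidef)
    (σ : ℝ) (hσpos : 0 < σ)
    (hσ : σ = ‖Matrix.toEuclideanCLM (𝕜 := ℝ) ((1 : Matrix (Fin n) (Fin n) ℝ) + β • W)‖)
    (η : ℝ) (hη0 : 0 < η) (hη : η < 2 / σ)
    (xk : EuclideanSpace ℂ (Fin n))
    (z : EuclideanSpace ℂ (Fin n)) (hz : z = xk - α • gradf xk)
    (S : (Fin n → ℝ) → (Fin n → ℝ))
    (hS : S = fun x i => max (x i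
        - η * ((((1 : Matrix (Fin n) (Fin n) ℝ) + β • W).mulVec x) i
            + β - ‖z i‖)) 0)
    (u : Fin n → ℂ)
    (hu : ∀ i, u i = if z i ≠ 0 then z i / (‖z i‖ : ℂ) else 1)
    (C : EuclideanSpace ℂ (Fin n) → ℝ)
    (hC : C = fun x => f x + lam * ((∑ i, ‖x i‖)
        + (1 / 2) * ∑ i, ∑ j, W i j * (‖x i‖ * ‖x j‖)))
    (m : ℕ) (hm : 1 ≤ m)
    (heq : C (WithLp.toLp 2 (fun i => ((S^[m] (fun i => ‖xk i‖)) i : ℂ) * u i)) = C xk) :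
    S (fun i => ‖xk i‖) = (fun i => ‖xk i‖)
    ∧ xk = WithLp.toLp 2 (fun i => ((S^[m] (fun i => ‖xk i‖)) i : ℂ) * u i) :=
  stmt13_general n W hsymm hnonneg f gradf hdiff L hL hlip lam hlam α hα0 hα β hβ σ hσpos hσ η hη0
    hη xk z hz S hS u hu C hC m hm heq
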